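/- (Lemma 2) For every fixed d with 0 < d < L, there exists a unique θ° in the closed interval [0, arccos(d/L)] satisfying ξ_L·L·sin θ° + (180·b/π)·(1 − p_b(d, θ°))·G(θ°)/(L − d·cos θ°) = 0, where G(θ) = (L² + d²)·cos θ − d·L·(1 + cos² θ), and this θ° is the unique global maximizer of the function θ ↦ f(d, θ) over θ ∈ [0, π/2]. -/

import Mathlib

/-- Distance from the UAV (at polar coordinates `(d, θ)` relative to Willie) to Bob. -/
noncomputable def db (L d θ : ℝ) : ℝ :=
  Real.sqrt (L ^ 2 + d ^ 2 - 2 * d * L * Real.cos θ)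

/-- Elevation angle from Bob to the UAV (in radians). -/
noncomputable def θb (L d θ : ℝ) : ℝ :=
  Real.arcsin (d * Real.sin θ / db L d θ)

/-- Probability of a LoS component in the UAV-to-Bob channel. -/
noncomputable def pb (a b L d θ : ℝ) : ℝ :=
  1 / (1 + a * Real.exp (-b * ((180 / Real.pi) * θb L d θ - a)))

/-- The objective `f(d, θ) = d_b^{ξ_L} · p_b`. -/
noncomputable def f (a b L ξL d θ : ℝ) : ℝ :=
  db L d θ ^ ξL * pb a b L d θ

/-- The function `G(θ) = (L² + d²)·cos θ − d·L·(1 + cos² θ)`. -/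
noncomputable def Gfun (L d θ : ℝ) : ℝ :=
  (L ^ 2 + d ^ 2) * Real.cos θ - d * L * (1 + Real.cos θ ^ 2)

/-!
By the chain rule `∂f/∂θ = f · (d / d_b²) · H` with
`H θ = ξ_L L sin θ + (180 b / π) (1 − p_b) (L cos θ − d)`, which is the paper's stationarity
expression once `G = (L − d cos θ) (L cos θ − d)` is factored. Put `θ₁ = arccos (d / L)`.
On `[0, θ₁]` the elevation angle `θ_b` increases, as `θ_b' = d (L cos θ − d) / d_b²`, so `p_b`
increases and `H` decreases strictly, from `H 0 > 0` to `H θ₁ < 0`; for `θ ≥ θ₁` both summands of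
`H` are `≤ 0` and the first is `< 0`. Hence `H` has exactly one zero `θ°` in `[0, θ₁]`, and `f`
strictly increases before it and strictly decreases after it.
-/

open Real Set

section Geometry

variable {L d : ℝ}

lemma sq_add_sq_sub_mul_cos_pos (hd : 0 < d) (hdL : d < L) (θ : ℝ) :
    0 < L ^ 2 + d ^ 2 - 2 * d * L * cos θ := by
  nlinarith [cos_le_one θ, mul_pos hd (hd.trans hdL)]

lemma db_pos (hd : 0 < d) (hdL : d < L) (θ : ℝ) : 0 < db L d θ :=
  sqrt_pos.mpr (sq_add_sq_sub_mul_cos_pos hd hdL θ)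

lemma db_sq (hd : 0 < d) (hdL : d < L) (θ : ℝ) :
    db L d θ ^ 2 = L ^ 2 + d ^ 2 - 2 * d * L * cos θ :=
  sq_sqrt (sq_add_sq_sub_mul_cos_pos hd hdL θ).le

lemma db_sq_sub_sq (hd : 0 < d) (hdL : d < L) (θ : ℝ) :
    db L d θ ^ 2 - (d * sin θ) ^ 2 = (L - d * cos θ) ^ 2 := by
  rw [db_sq hd hdL, mul_pow, sin_sq]
  ring

lemma sub_mul_cos_pos (hd : 0 < d) (hdL : d < L) (θ : ℝ) : 0 < L - d * cos θ := by
  nlinarith [cos_le_one θ]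

lemma Gfun_eq_mul (θ : ℝ) : Gfun L d θ = (L - d * cos θ) * (L * cos θ - d) := by
  unfold Gfun
  ring

lemma mul_cos_sub_nonneg_of_le_arccos (hd : 0 < d) (hdL : d < L) {θ : ℝ} (h0 : 0 ≤ θ)
    (hθ : θ ≤ arccos (d / L)) : 0 ≤ L * cos θ - d := by
  have hL := hd.trans hdL
  have := cos_le_cos_of_nonneg_of_le_pi h0 (arccos_le_pi _) hθ
  rw [cos_arccos (by linarith [div_pos hd hL]) ((div_le_one hL).mpr hdL.le), div_le_iff₀ hL] at this
  linarith

lemma mul_cos_sub_nonpos_of_arccos_le (hd : 0 < d) (hdL : d < L) {θ : ℝ}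
    (hθ : arccos (d / L) ≤ θ) (hπ : θ ≤ π) : L * cos θ - d ≤ 0 := by
  have hL := hd.trans hdL
  have := cos_le_cos_of_nonneg_of_le_pi (arccos_nonneg _) hπ hθ
  rw [cos_arccos (by linarith [div_pos hd hL]) ((div_le_one hL).mpr hdL.le), le_div_iff₀ hL] at this
  linarith

lemma hasDerivAt_db (hd : 0 < d) (hdL : d < L) (θ : ℝ) :
    HasDerivAt (db L d) (d * L * sin θ / db L d θ) θ := by
  have hq : HasDerivAt (fun θ => L ^ 2 + d ^ 2 - 2 * d * L * cos θ) (2 * d * L * sin θ) θ := by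
    simpa using ((hasDerivAt_cos θ).const_mul (2 * d * L)).const_sub (L ^ 2 + d ^ 2)
  refine (hq.sqrt (sq_add_sq_sub_mul_cos_pos hd hdL θ).ne').congr_deriv ?_
  have hdb := db_pos hd hdL θ
  unfold db at hdb ⊢
  field_simp

lemma hasDerivAt_θb (hd : 0 < d) (hdL : d < L) (θ : ℝ) :
    HasDerivAt (θb L d) (d * (L * cos θ - d) / db L d θ ^ 2) θ := by
  have hdb := db_pos hd hdL θ
  have hc := sub_mul_cos_pos hd hdL θ
  have hs : HasDerivAt (fun θ => d * sin θ / db L d θ) (d * Gfun L d θ / db L d θ ^ 3) θ := by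
    refine (((hasDerivAt_sin θ).const_mul d).div (hasDerivAt_db hd hdL θ) hdb.ne').congr_deriv ?_
    rw [Gfun_eq_mul]
    field_simp
    linear_combination cos θ * db_sq hd hdL θ - d * L * sin_sq θ
  have hcos_sq : 1 - (d * sin θ / db L d θ) ^ 2 = ((L - d * cos θ) / db L d θ) ^ 2 := by
    rw [div_pow, div_pow, ← db_sq_sub_sq hd hdL θ]
    field_simp
  have habs : |d * sin θ / db L d θ| < 1 := by
    rw [← sq_lt_one_iff_abs_lt_one]
    nlinarith [sq_nonneg (L - d * cos θ), div_pos hc hdb]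
  have h := (hasDerivAt_arcsin (abs_lt.mp habs).1.ne' (abs_lt.mp habs).2.ne).comp θ hs
  rw [hcos_sq, sqrt_sq (div_pos hc hdb).le, Gfun_eq_mul] at h
  refine h.congr_deriv ?_
  field_simp

end Geometry

section Objective

variable {a b L ξL d : ℝ}

lemma pb_pos (ha : 0 ≤ a) (θ : ℝ) : 0 < pb a b L d θ :=
  one_div_pos.mpr (by positivity)

lemma pb_lt_one (ha : 0 < a) (θ : ℝ) : pb a b L d θ < 1 := by
  unfold pb
  rw [div_lt_one (by positivity)]
  exact lt_add_of_pos_right 1 (by positivity)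

lemma hasDerivAt_pb (ha : 0 ≤ a) (hd : 0 < d) (hdL : d < L) (θ : ℝ) :
    HasDerivAt (pb a b L d)
      (180 / π * b * pb a b L d θ * (1 - pb a b L d θ) * (d * (L * cos θ - d) / db L d θ ^ 2))
      θ := by
  have hu := (((hasDerivAt_θb hd hdL θ).const_mul (180 / π)).sub_const a).const_mul (-b)
  have hD := (hu.exp.const_mul a).const_add 1
  have hpos : 0 < 1 + a * exp (-b * (180 / π * θb L d θ - a)) := by positivity
  refine ((hasDerivAt_const θ (1 : ℝ)).div hD hpos.ne').congr_deriv ?_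
  unfold pb
  field_simp
  ring

noncomputable def Hfun (a b L ξL d θ : ℝ) : ℝ :=
  ξL * L * sin θ + 180 * b / π * (1 - pb a b L d θ) * (L * cos θ - d)

lemma hasDerivAt_f (ha : 0 ≤ a) (hd : 0 < d) (hdL : d < L) (θ : ℝ) :
    HasDerivAt (f a b L ξL d) (f a b L ξL d θ * (d / db L d θ ^ 2) * Hfun a b L ξL d θ) θ := by
  have hdb := db_pos hd hdL θ
  refine (((hasDerivAt_db hd hdL θ).rpow_const (p := ξL) (Or.inl hdb.ne')).mul
    (hasDerivAt_pb (b := b) ha hd hdL θ)).congr_deriv ?_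
  rw [rpow_sub hdb, rpow_one]
  unfold f Hfun
  field_simp

lemma f_pos (ha : 0 ≤ a) (hd : 0 < d) (hdL : d < L) (θ : ℝ) : 0 < f a b L ξL d θ :=
  mul_pos (rpow_pos_of_pos (db_pos hd hdL θ) _) (pb_pos ha θ)

lemma stationarity_eq_Hfun (hd : 0 < d) (hdL : d < L) (θ : ℝ) :
    ξL * L * sin θ + 180 * b / π * (1 - pb a b L d θ) * Gfun L d θ / (L - d * cos θ) =
      Hfun a b L ξL d θ := by
  have := sub_mul_cos_pos hd hdL θ
  rw [Gfun_eq_mul, Hfun]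
  field_simp

end Objective

section SignOfHfun

variable {a b L ξL d : ℝ}

lemma arccos_div_mem_Ioc (hd : 0 < d) (hdL : d < L) : arccos (d / L) ∈ Ioc 0 (π / 2) :=
  ⟨arccos_pos.mpr ((div_lt_one (hd.trans hdL)).mpr hdL),
    arccos_le_pi_div_two.mpr (div_pos hd (hd.trans hdL)).le⟩

lemma monotoneOn_θb (hd : 0 < d) (hdL : d < L) :
    MonotoneOn (θb L d) (Icc 0 (arccos (d / L))) := by
  refine monotoneOn_of_hasDerivWithinAt_nonneg (convex_Icc _ _)
    (fun θ _ => (hasDerivAt_θb hd hdL θ).continuousAt.continuousWithinAt)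
    (fun θ _ => (hasDerivAt_θb hd hdL θ).hasDerivWithinAt) fun θ hθ => ?_
  rw [interior_Icc] at hθ
  have := mul_cos_sub_nonneg_of_le_arccos hd hdL hθ.1.le hθ.2.le
  positivity

lemma monotoneOn_pb (ha : 0 ≤ a) (hb : 0 ≤ b) (hd : 0 < d) (hdL : d < L) :
    MonotoneOn (pb a b L d) (Icc 0 (arccos (d / L))) := by
  intro x hx y hy hxy
  have := monotoneOn_θb hd hdL hx hy hxy
  simp only [pb, neg_mul]
  gcongr

lemma strictAntiOn_Hfun (ha : 0 < a) (hb : 0 ≤ b) (hξ : ξL < 0) (hd : 0 < d) (hdL : d < L) :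
    StrictAntiOn (Hfun a b L ξL d) (Icc 0 (arccos (d / L))) := by
  intro x hx y hy hxy
  have hθ₁ := arccos_div_mem_Ioc hd hdL
  have hsin : sin x < sin y :=
    strictMonoOn_sin ⟨by linarith [hx.1, pi_pos], hx.2.trans hθ₁.2⟩
      ⟨by linarith [hy.1, pi_pos], hy.2.trans hθ₁.2⟩ hxy
  have hcos : cos y ≤ cos x :=
    cos_le_cos_of_nonneg_of_le_pi hx.1 (by linarith [hy.2, hθ₁.2, pi_pos]) hxy.le
  have hpb := monotoneOn_pb ha.le hb hd hdL hx hy hxy.le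
  have hy₀ := mul_cos_sub_nonneg_of_le_arccos hd hdL hy.1 hy.2
  have hx₁ : 0 ≤ 1 - pb a b L d x := sub_nonneg.mpr (pb_lt_one ha x).le
  have hdecr : (1 - pb a b L d y) * (L * cos y - d) ≤ (1 - pb a b L d x) * (L * cos x - d) := by
    have := (hd.trans hdL).le
    gcongr
  have hξL : ξL * L < 0 := mul_neg_of_neg_of_pos hξ (hd.trans hdL)
  have hC : 0 ≤ 180 * b / π := by positivity
  unfold Hfun
  linarith [mul_lt_mul_of_neg_left hsin hξL, mul_le_mul_of_nonneg_left hdecr hC]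

lemma Hfun_zero_pos (ha : 0 < a) (hb : 0 < b) (hdL : d < L) : 0 < Hfun a b L ξL d 0 := by
  have h₁ : 0 < 1 - pb a b L d 0 := sub_pos.mpr (pb_lt_one ha 0)
  have h₂ : 0 < L - d := sub_pos.mpr hdL
  simpa [Hfun] using (by positivity : 0 < 180 * b / π * (1 - pb a b L d 0) * (L - d))

lemma Hfun_neg_of_arccos_le (ha : 0 < a) (hb : 0 ≤ b) (hξ : ξL < 0) (hd : 0 < d) (hdL : d < L)
    {θ : ℝ} (hθ : arccos (d / L) ≤ θ) (hπ : θ < π) : Hfun a b L ξL d θ < 0 := by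
  have hsin : 0 < sin θ := sin_pos_of_pos_of_lt_pi ((arccos_div_mem_Ioc hd hdL).1.trans_le hθ) hπ
  have hcos := mul_cos_sub_nonpos_of_arccos_le hd hdL hθ hπ.le
  have : 0 ≤ 180 * b / π * (1 - pb a b L d θ) := by
    have := sub_nonneg.mpr (pb_lt_one (b := b) (L := L) (d := d) ha θ).le
    positivity
  unfold Hfun
  linarith [mul_nonpos_of_nonneg_of_nonpos this hcos,
    mul_neg_of_neg_of_pos (mul_neg_of_neg_of_pos hξ (hd.trans hdL)) hsin]

lemma continuous_Hfun (ha : 0 ≤ a) (hd : 0 < d) (hdL : d < L) : Continuous (Hfun a b L ξL d) := by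
  have : Continuous (pb a b L d) :=
    continuous_iff_continuousAt.mpr fun θ => (hasDerivAt_pb ha hd hdL θ).continuousAt
  unfold Hfun
  fun_prop

end SignOfHfun

lemma apply_lt_of_deriv_pos_of_deriv_neg {f f' : ℝ → ℝ} {a m c : ℝ}
    (hf : ∀ x, HasDerivAt f (f' x) x) (hpos : ∀ x ∈ Ioo a m, 0 < f' x)
    (hneg : ∀ x ∈ Ioo m c, f' x < 0) {x : ℝ} (hx : x ∈ Icc a c) (hxm : x ≠ m) : f x < f m := by
  have hcont : ∀ s, ContinuousOn f s := fun s =>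
    (continuous_iff_continuousAt.mpr fun x => (hf x).continuousAt).continuousOn
  rcases hxm.lt_or_gt with hlt | hgt
  · refine strictMonoOn_of_hasDerivWithinAt_pos (convex_Icc a m) (hcont _)
      (fun y _ => (hf y).hasDerivWithinAt) (by simpa using hpos) ⟨hx.1, hlt.le⟩
      ⟨hx.1.trans hlt.le, le_rfl⟩ hlt
  · refine strictAntiOn_of_hasDerivWithinAt_neg (convex_Icc m c) (hcont _)
      (fun y _ => (hf y).hasDerivWithinAt) (by simpa using hneg) ⟨le_rfl, hgt.le.trans hx.2⟩
      ⟨hgt.le, hx.2⟩ hgt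

theorem stmt_10_general (a b L ξL d : ℝ) (ha : 0 < a) (hb : 0 < b)
    (hξ : ξL < 0) (hd : 0 < d) (hdL : d < L) :
    ∃ θ0 : ℝ, θ0 ∈ Set.Icc 0 (Real.arccos (d / L)) ∧
      ξL * L * Real.sin θ0 +
        (180 * b / Real.pi) * (1 - pb a b L d θ0) * Gfun L d θ0 / (L - d * Real.cos θ0) = 0 ∧
      (∀ θ ∈ Set.Icc 0 (Real.arccos (d / L)),
        ξL * L * Real.sin θ +
          (180 * b / Real.pi) * (1 - pb a b L d θ) * Gfun L d θ / (L - d * Real.cos θ) = 0 →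
        θ = θ0) ∧
      (∀ θ ∈ Set.Icc 0 (Real.pi / 2), θ ≠ θ0 → f a b L ξL d θ < f a b L ξL d θ0) := by
  have hθ₁ := arccos_div_mem_Ioc hd hdL
  have hanti := strictAntiOn_Hfun ha hb.le hξ hd hdL
  obtain ⟨θ0, hθ0, hzero⟩ : ∃ θ0 ∈ Ioo 0 (arccos (d / L)), Hfun a b L ξL d θ0 = 0 :=
    intermediate_value_Ioo' hθ₁.1.le (continuous_Hfun ha.le hd hdL).continuousOn
      ⟨Hfun_neg_of_arccos_le ha hb.le hξ hd hdL le_rfl (by linarith [hθ₁.2, pi_pos]),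
        Hfun_zero_pos ha hb hdL⟩
  have hθ0' := Ioo_subset_Icc_self hθ0
  simp only [stationarity_eq_Hfun hd hdL]
  refine ⟨θ0, hθ0', hzero, fun θ hθ hθz => hanti.injOn hθ hθ0' (hθz.trans hzero.symm), ?_⟩
  intro θ hθ hne
  have hfactor : ∀ x, 0 < f a b L ξL d x * (d / db L d x ^ 2) := fun x =>
    mul_pos (f_pos ha.le hd hdL x) (div_pos hd (pow_pos (db_pos hd hdL x) 2))
  refine apply_lt_of_deriv_pos_of_deriv_neg (hasDerivAt_f ha.le hd hdL) (fun x hx => ?_)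
    (fun x hx => ?_) hθ hne
  · exact mul_pos (hfactor x) (hzero ▸ hanti ⟨hx.1.le, hx.2.le.trans hθ0'.2⟩ hθ0' hx.2)
  · refine mul_neg_of_pos_of_neg (hfactor x) ?_
    rcases le_or_gt x (arccos (d / L)) with h | h
    · exact hzero ▸ hanti hθ0' ⟨hθ0.1.le.trans hx.1.le, h⟩ hx.1
    · exact Hfun_neg_of_arccos_le ha hb.le hξ hd hdL h.le (by linarith [hx.2, pi_pos])

/-- Lemma 2: for fixed `0 < d < L`, there is a unique `θ°` in `[0, arccos(d/L)]` solving
`ξ_L·L·sin θ° + (180·b/π)·(1 − p_b(d, θ°))·G(θ°)/(L − d·cos θ°) = 0`,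
and this `θ°` is the unique global maximizer of `θ ↦ f(d, θ)` over `[0, π/2]`. -/
theorem stmt_10 (a b L ξL d : ℝ) (ha : 0 < a) (hb : 0 < b) (hL : 0 < L)
    (hξ : ξL < 0) (hd : 0 < d) (hdL : d < L) :
    ∃ θ0 : ℝ, θ0 ∈ Set.Icc 0 (Real.arccos (d / L)) ∧
      ξL * L * Real.sin θ0 +
        (180 * b / Real.pi) * (1 - pb a b L d θ0) * Gfun L d θ0 / (L - d * Real.cos θ0) = 0 ∧
      (∀ θ ∈ Set.Icc 0 (Real.arccos (d / L)),
        ξL * L * Real.sin θ +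
          (180 * b / Real.pi) * (1 - pb a b L d θ) * Gfun L d θ / (L - d * Real.cos θ) = 0 →
        θ = θ0) ∧
      (∀ θ ∈ Set.Icc 0 (Real.pi / 2), θ ≠ θ0 → f a b L ξL d θ < f a b L ξL d θ0) :=
  stmt_10_general a b L ξL d ha hb hξ hd hdL
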